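/- Let $f : U \to \mathbb{R}^n$ be defined on an open set $U \subset \mathbb{R}^2$. Suppose that the partial derivatives $D_1 f$ and $D_2 f$ exist at every point of $U$, that the iterated partial derivative $D_2 D_1 f$ exists at every point of $U$, and that $D_2 D_1 f$ is continuous at some point $(x_0,y_0) \in U$. Then the iterated partial derivative $D_1 D_2 f$ exists at $(x_0,y_0)$ and $(D_1 D_2 f)(x_0,y_0) = (D_2 D_1 f)(x_0,y_0)$. -/

import Mathlib

open Set

/-- **Peano's version of Schwarz' theorem.**
Let `f : U → ℝⁿ` on an open set `U ⊆ ℝ²`.  Suppose the partial derivatives `D₁ f`,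
`D₂ f` exist on `U`, the iterated partial derivative `D₂ D₁ f` exists on `U`, and
`D₂ D₁ f` is continuous at some point `(x₀, y₀) ∈ U`.  Then `D₁ D₂ f` exists at
`(x₀, y₀)` and `(D₁ D₂ f)(x₀,y₀) = (D₂ D₁ f)(x₀,y₀)`.
Here `D₁ f (x,y)` is the derivative at `x` of `s ↦ f (s, y)` and `D₂ f (x,y)` is the
derivative at `y` of `s ↦ f (x, s)`. -/
theorem peano_schwarz (n : ℕ) (U : Set (ℝ × ℝ)) (hU : IsOpen U)
    (f f₁ f₂ f₂₁ : ℝ × ℝ → EuclideanSpace ℝ (Fin n))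
    (hf₁ : ∀ p ∈ U, HasDerivAt (fun s => f (s, p.2)) (f₁ p) p.1)
    (hf₂ : ∀ p ∈ U, HasDerivAt (fun s => f (p.1, s)) (f₂ p) p.2)
    (hf₂₁ : ∀ p ∈ U, HasDerivAt (fun s => f₁ (p.1, s)) (f₂₁ p) p.2)
    (x₀ y₀ : ℝ) (hp₀ : (x₀, y₀) ∈ U)
    (hcont : ContinuousAt f₂₁ (x₀, y₀)) :
    HasDerivAt (fun s => f₂ (s, y₀)) (f₂₁ (x₀, y₀)) x₀ := by
  set A := f₂₁ (x₀, y₀) with hA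
  rw [hasDerivAt_iff_isLittleO_nhds_zero, Asymptotics.isLittleO_iff]
  intro c hc
  -- choose δ
  have hev : ∀ᶠ p in nhds ((x₀, y₀) : ℝ × ℝ), p ∈ U ∧ ‖f₂₁ p - A‖ ≤ c := by
    have h1 : ∀ᶠ p in nhds ((x₀, y₀) : ℝ × ℝ), ‖f₂₁ p - A‖ ≤ c := by
      have := hcont (Metric.closedBall_mem_nhds A hc)
      filter_upwards [this] with p hp
      simpa [Metric.mem_closedBall, dist_eq_norm] using hp
    filter_upwards [hU.mem_nhds hp₀, h1] with p h1 h2 using ⟨h1, h2⟩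
  obtain ⟨δ, hδpos, hδ⟩ := Metric.nhds_basis_closedBall.eventually_iff.1 hev
  -- membership helper
  have hball : ∀ s t : ℝ, |s - x₀| ≤ δ → |t - y₀| ≤ δ →
      (s, t) ∈ U ∧ ‖f₂₁ (s, t) - A‖ ≤ c := by
    intro s t hs ht
    apply hδ
    simp only [Metric.mem_closedBall, Prod.dist_eq, Real.dist_eq]
    exact max_le hs ht
  -- inner MVT estimate
  have inner : ∀ s : ℝ, |s - x₀| ≤ δ → ∀ k : ℝ, |k| ≤ δ →
      ‖f₁ (s, y₀ + k) - f₁ (s, y₀) - k • A‖ ≤ c * |k| := by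
    intro s hs k hk
    have hmem : ∀ t ∈ uIcc y₀ (y₀ + k), |t - y₀| ≤ δ := by
      intro t ht
      rcases mem_uIcc.1 ht with h | h <;>
        [skip; skip] <;> rw [abs_le] <;> constructor <;> try linarith [abs_le.1 hk |>.1, abs_le.1 hk |>.2, h.1, h.2]
    have key := Convex.norm_image_sub_le_of_norm_hasDerivWithin_le
      (f := fun t => f₁ (s, t) - t • A) (f' := fun t => f₂₁ (s, t) - A)
      (s := uIcc y₀ (y₀ + k)) (C := c)
      (fun t ht => by
        have hd : HasDerivAt (fun t => f₁ (s, t)) (f₂₁ (s, t)) t :=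
          hf₂₁ (s, t) (hball s t hs (hmem t ht)).1
        exact ((hd.sub ((hasDerivAt_id t).smul_const A)).congr_deriv (by simp)).hasDerivWithinAt)
      (fun t ht => (hball s t hs (hmem t ht)).2)
      (convex_uIcc _ _) left_mem_uIcc right_mem_uIcc
    have : f₁ (s, y₀ + k) - (y₀ + k) • A - (f₁ (s, y₀) - y₀ • A)
        = f₁ (s, y₀ + k) - f₁ (s, y₀) - k • A := by
      rw [add_smul]; abel
    simpa [this, Real.norm_eq_abs, add_sub_cancel_left] using key
  -- outer estimate for fixed h, k
  have outer : ∀ h : ℝ, |h| ≤ δ → ∀ k : ℝ, |k| ≤ δ →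
      ‖(f (x₀ + h, y₀ + k) - f (x₀ + h, y₀)) - (f (x₀, y₀ + k) - f (x₀, y₀)) - (h * k) • A‖
        ≤ c * |k| * |h| := by
    intro h hh k hk
    have hmem : ∀ s ∈ uIcc x₀ (x₀ + h), |s - x₀| ≤ δ := by
      intro s hs
      rcases mem_uIcc.1 hs with h' | h' <;> rw [abs_le] <;> constructor <;>
        linarith [abs_le.1 hh |>.1, abs_le.1 hh |>.2, h'.1, h'.2]
    have key := Convex.norm_image_sub_le_of_norm_hasDerivWithin_le
      (f := fun s => f (s, y₀ + k) - f (s, y₀) - s • (k • A))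
      (f' := fun s => f₁ (s, y₀ + k) - f₁ (s, y₀) - k • A)
      (s := uIcc x₀ (x₀ + h)) (C := c * |k|)
      (fun s hs => by
        have hd1 : HasDerivAt (fun s => f (s, y₀ + k)) (f₁ (s, y₀ + k)) s :=
          hf₁ (s, y₀ + k) (hball s (y₀ + k) (hmem s hs) (by simpa using hk)).1
        have hd2 : HasDerivAt (fun s => f (s, y₀)) (f₁ (s, y₀)) s :=
          hf₁ (s, y₀) (hball s y₀ (hmem s hs) (by simp [hδpos.le])).1
        exact (((hd1.sub hd2).sub ((hasDerivAt_id s).smul_const (k • A))).congr_deriv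
          (by simp)).hasDerivWithinAt)
      (fun s hs => inner s (hmem s hs) k hk)
      (convex_uIcc _ _) left_mem_uIcc right_mem_uIcc
    have heq : f (x₀ + h, y₀ + k) - f (x₀ + h, y₀) - (x₀ + h) • (k • A)
        - (f (x₀, y₀ + k) - f (x₀, y₀) - x₀ • (k • A))
        = (f (x₀ + h, y₀ + k) - f (x₀ + h, y₀)) - (f (x₀, y₀ + k) - f (x₀, y₀)) - (h * k) • A := by
      rw [add_smul, mul_smul]; abel
    simpa [heq, Real.norm_eq_abs, add_sub_cancel_left] using key
  -- main eventually statement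
  have hδ' : ∀ᶠ h : ℝ in nhds 0, |h| ≤ δ := by
    filter_upwards [Metric.closedBall_mem_nhds (0 : ℝ) hδpos] with h hh
    simpa [Real.dist_eq] using hh
  filter_upwards [hδ'] with h hh
  -- Now show ‖f₂ (x₀ + h, y₀) - f₂ (x₀, y₀) - h • A‖ ≤ c * ‖h‖ via limit k → 0
  set L := f₂ (x₀ + h, y₀) - f₂ (x₀, y₀) - h • A with hL
  have hmem1 : (x₀ + h, y₀) ∈ U := (hball (x₀ + h) y₀ (by simpa using hh) (by simp [hδpos.le])).1
  have t1 : Filter.Tendsto (fun k : ℝ => k⁻¹ • (f (x₀ + h, y₀ + k) - f (x₀ + h, y₀)))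
      (nhdsWithin 0 {0}ᶜ) (nhds (f₂ (x₀ + h, y₀))) := by
    have hd := hasDerivAt_iff_tendsto_slope.1 (hf₂ (x₀ + h, y₀) hmem1)
    have hmap : Filter.Tendsto (fun k : ℝ => y₀ + k) (nhdsWithin 0 {0}ᶜ) (nhdsWithin y₀ {y₀}ᶜ) := by
      apply Filter.Tendsto.inf
      · simpa using (continuous_add_left y₀).tendsto (0 : ℝ)
      · apply Filter.tendsto_principal_principal.2
        intro k hk
        simpa using fun hcontra => hk (by simp [hcontra])
    have := hd.comp hmap
    refine this.congr fun k => ?_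
    simp [slope, vsub_eq_sub]
  have t2 : Filter.Tendsto (fun k : ℝ => k⁻¹ • (f (x₀, y₀ + k) - f (x₀, y₀)))
      (nhdsWithin 0 {0}ᶜ) (nhds (f₂ (x₀, y₀))) := by
    have hd := hasDerivAt_iff_tendsto_slope.1 (hf₂ (x₀, y₀) hp₀)
    have hmap : Filter.Tendsto (fun k : ℝ => y₀ + k) (nhdsWithin 0 {0}ᶜ) (nhdsWithin y₀ {y₀}ᶜ) := by
      apply Filter.Tendsto.inf
      · simpa using (continuous_add_left y₀).tendsto (0 : ℝ)
      · apply Filter.tendsto_principal_principal.2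
        intro k hk
        simpa using fun hcontra => hk (by simp [hcontra])
    have := hd.comp hmap
    refine this.congr fun k => ?_
    simp [slope, vsub_eq_sub]
  have tG : Filter.Tendsto (fun k : ℝ =>
      k⁻¹ • ((f (x₀ + h, y₀ + k) - f (x₀ + h, y₀)) - (f (x₀, y₀ + k) - f (x₀, y₀)) - (h * k) • A))
      (nhdsWithin 0 {0}ᶜ) (nhds L) := by
    have := (t1.sub t2).sub (tendsto_const_nhds (x := h • A))
    refine this.congr' ?_
    filter_upwards [self_mem_nhdsWithin] with k hk
    have hk' : (k : ℝ) ≠ 0 := hk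
    have hks : k⁻¹ * (h * k) = h := by field_simp
    simp only [smul_sub, smul_smul, hks]
  have hbound : ∀ᶠ k : ℝ in nhdsWithin 0 {0}ᶜ, ‖(fun k : ℝ =>
      k⁻¹ • ((f (x₀ + h, y₀ + k) - f (x₀ + h, y₀)) - (f (x₀, y₀ + k) - f (x₀, y₀)) - (h * k) • A)) k‖
      ≤ c * |h| := by
    have : ∀ᶠ k : ℝ in nhdsWithin 0 {0}ᶜ, |k| ≤ δ ∧ k ≠ 0 := by
      refine Filter.eventually_inf_principal.2 ?_
      filter_upwards [Metric.closedBall_mem_nhds (0 : ℝ) hδpos] with k hk hk'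
      exact ⟨by simpa [Real.dist_eq] using hk, hk'⟩
    filter_upwards [this] with k ⟨hk, hk0⟩
    rw [norm_smul, Real.norm_eq_abs, abs_inv]
    calc |k|⁻¹ * ‖_‖ ≤ |k|⁻¹ * (c * |k| * |h|) := by
          gcongr
          exact outer h hh k hk
      _ = c * |h| := by
          field_simp
  have hnorm := le_of_tendsto (tG.norm) hbound
  simpa [hL, Real.norm_eq_abs] using hnorm
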